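/- Let K > 0 and define Γ_K : ℝ → [0, ∞) by Γ_K(t) = |t|^{5/2} if |t| ≤ K and Γ_K(t) = (5/4) K^{1/2} t² − (1/4) K^{5/2} if |t| ≥ K, and let ‖f‖_{Γ_K} := inf { λ > 0 : ∫_𝕋 Γ_K(f(x)/λ) dx ≤ 1 } denote the associated Orlicz norm on measurable functions on 𝕋 = [0,1]. Then for any measurable functions f_1, …, f_k from 𝕋 to ℝ, ‖ (∑_{i=1}^k |f_i|²)^{1/2} ‖_{Γ_K} ≤ ( ∑_{i=1}^k ‖f_i‖²_{Γ_K} )^{1/2}. -/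

import Mathlib

open MeasureTheory

/-- The Young function `Γ_K`. -/
noncomputable def GammaK (K t : ℝ) : ℝ :=
  if |t| ≤ K then |t| ^ ((5:ℝ)/2)
  else (5/4) * K ^ ((1:ℝ)/2) * t ^ 2 - (1/4) * K ^ ((5:ℝ)/2)

/-- The Orlicz (Luxemburg) norm associated to `Γ_K` on functions on `[0,1]`. -/
noncomputable def orliczNormK (K : ℝ) (f : ℝ → ℝ) : ℝ :=
  sInf { lam : ℝ | 0 < lam ∧ (∫ x in Set.Icc (0:ℝ) 1, GammaK K (f x / lam)) ≤ 1 }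

/-! Write `Γ_K(t) = ψ_K(t²)`, where `ψ_K(u) = u^{5/4}` on `[0, K²]` and is continued by its
tangent line, so `ψ_K` is convex on `[0, ∞)`. If `λ_i` is admissible for `f_i` and
`Λ² = ∑ λ_i²`, Jensen's inequality for `ψ_K` with weights `λ_i² / Λ²` gives
`Γ_K(g / Λ) ≤ ∑ (λ_i² / Λ²) Γ_K(f_i / λ_i)` pointwise for `g = (∑ f_i²)^{1/2}`, so `Λ` is
admissible for `g`; letting `λ_i` decrease to `‖f_i‖` gives the claim.

The Bochner integral of a non-integrable function is `0`, so every `λ > 0` is admissible for a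
function whose square is not integrable (`Γ_K` is comparable to `t²`) and its norm is `0`;
this happens to `g` as soon as it happens to some `f_i`. -/

open Set

lemma HasDerivAt.ite_le {f g : ℝ → ℝ} {a f' : ℝ} (hf : HasDerivAt f f' a) (hg : HasDerivAt g f' a)
    (hfg : f a = g a) : HasDerivAt (fun x => if x ≤ a then f x else g x) f' a := by
  have hleft : HasDerivWithinAt (fun x => if x ≤ a then f x else g x) f' (Iic a) a :=
    hf.hasDerivWithinAt.congr (fun x hx => if_pos hx) (if_pos le_rfl)
  have hright : HasDerivWithinAt (fun x => if x ≤ a then f x else g x) f' (Ici a) a := by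
    refine hg.hasDerivWithinAt.congr (fun x hx => ?_) (by simp [hfg])
    rcases (mem_Ici.mp hx).eq_or_lt with rfl | h
    · simp [hfg]
    · simp [not_le.mpr h]
  simpa [Iic_union_Ici] using hleft.union hright

noncomputable def psiK (K u : ℝ) : ℝ :=
  if u ≤ K ^ 2 then u ^ ((5:ℝ)/4)
  else (5/4) * K ^ ((1:ℝ)/2) * u - (1/4) * K ^ ((5:ℝ)/2)

section psiK

variable {K : ℝ}

lemma rpow_five_halves_eq (hK : 0 < K) : K ^ ((5:ℝ)/2) = K ^ ((1:ℝ)/2) * K ^ 2 := by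
  rw [← Real.rpow_add_natCast hK.ne']; norm_num

lemma sq_rpow_one_fourth (hK : 0 < K) : (K ^ 2) ^ ((1:ℝ)/4) = K ^ ((1:ℝ)/2) := by
  rw [← Real.rpow_natCast_mul hK.le]; norm_num

lemma psiK_sq_boundary (hK : 0 < K) :
    (K ^ 2) ^ ((5:ℝ)/4) = (5/4) * K ^ ((1:ℝ)/2) * K ^ 2 - (1/4) * K ^ ((5:ℝ)/2) := by
  rw [← Real.rpow_natCast_mul hK.le]; norm_num; rw [rpow_five_halves_eq hK]; ring

lemma gammaK_eq_psiK_sq (hK : 0 < K) (t : ℝ) : GammaK K t = psiK K (t ^ 2) := by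
  have habs : t ^ 2 ≤ K ^ 2 ↔ |t| ≤ K := by rw [sq_le_sq, abs_of_pos hK]
  have hpow : (t ^ 2) ^ ((5:ℝ)/4) = |t| ^ ((5:ℝ)/2) := by
    rw [← sq_abs, ← Real.rpow_natCast |t| 2, ← Real.rpow_mul (abs_nonneg t)]; norm_num
  simp only [GammaK, psiK, habs, hpow]

lemma continuous_psiK (hK : 0 < K) : Continuous (psiK K) :=
  (Real.continuous_rpow_const (by norm_num)).if_le (by fun_prop) continuous_id continuous_const
    fun _ hu => hu ▸ psiK_sq_boundary hK

lemma hasDerivAt_psiK (hK : 0 < K) {u : ℝ} (hu : 0 < u) :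
    HasDerivAt (psiK K) ((5/4) * min u (K ^ 2) ^ ((1:ℝ)/4)) u := by
  have hpow : ∀ v, 0 < v → HasDerivAt (fun w : ℝ => w ^ ((5:ℝ)/4)) ((5/4) * v ^ ((1:ℝ)/4)) v :=
    fun v hv => by
      convert Real.hasDerivAt_rpow_const (p := (5:ℝ)/4) (Or.inl hv.ne') using 2; norm_num
  have hlin : ∀ v, HasDerivAt (fun w : ℝ => (5/4) * K ^ ((1:ℝ)/2) * w - (1/4) * K ^ ((5:ℝ)/2))
      ((5/4) * K ^ ((1:ℝ)/2)) v :=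
    fun v => by
      simpa using ((hasDerivAt_id v).const_mul ((5/4) * K ^ ((1:ℝ)/2))).sub_const
        ((1/4) * K ^ ((5:ℝ)/2))
  rcases lt_trichotomy u (K ^ 2) with h | rfl | h
  · rw [min_eq_left h.le]
    refine (hpow u hu).congr_of_eventuallyEq ?_
    filter_upwards [Iio_mem_nhds h] with v (hv : v < K ^ 2)
    rw [psiK, if_pos hv.le]
  · rw [min_self, sq_rpow_one_fourth hK]
    exact (sq_rpow_one_fourth hK ▸ hpow _ (by positivity)).ite_le (hlin _) (psiK_sq_boundary hK)
  · rw [min_eq_right h.le, sq_rpow_one_fourth hK]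
    refine (hlin u).congr_of_eventuallyEq ?_
    filter_upwards [Ioi_mem_nhds h] with v (hv : K ^ 2 < v)
    rw [psiK, if_neg (not_le.mpr hv)]

lemma convexOn_psiK (hK : 0 < K) : ConvexOn ℝ (Ici 0) (psiK K) := by
  have hderiv : ∀ u ∈ interior (Ici (0:ℝ)),
      HasDerivAt (psiK K) ((5/4) * min u (K ^ 2) ^ ((1:ℝ)/4)) u := by
    rw [interior_Ici]; exact fun u hu => hasDerivAt_psiK hK hu
  refine MonotoneOn.convexOn_of_deriv (convex_Ici 0) (continuous_psiK hK).continuousOn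
    (fun u hu => (hderiv u hu).differentiableAt.differentiableWithinAt) fun a ha b hb hab => ?_
  rw [(hderiv a ha).deriv, (hderiv b hb).deriv]
  rw [interior_Ici] at ha
  gcongr
  exact le_min (mem_Ioi.mp ha).le (by positivity)

lemma psiK_nonneg (hK : 0 < K) {u : ℝ} (hu : 0 ≤ u) : 0 ≤ psiK K u := by
  have : 0 < K ^ ((1:ℝ)/2) := Real.rpow_pos_of_pos hK _
  unfold psiK
  split_ifs with h
  · positivity
  · rw [rpow_five_halves_eq hK]; nlinarith

lemma psiK_le_mul (hK : 0 < K) {u : ℝ} (hu : 0 ≤ u) : psiK K u ≤ (5/4) * K ^ ((1:ℝ)/2) * u := by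
  unfold psiK
  split_ifs with h
  · have hle : u ^ ((1:ℝ)/4) ≤ K ^ ((1:ℝ)/2) :=
      sq_rpow_one_fourth hK ▸ Real.rpow_le_rpow hu h (by norm_num)
    calc u ^ ((5:ℝ)/4) = u * u ^ ((1:ℝ)/4) := by
          rw [← Real.rpow_one_add' hu (by norm_num)]; norm_num
      _ ≤ u * K ^ ((1:ℝ)/2) := by gcongr
      _ ≤ (5/4) * K ^ ((1:ℝ)/2) * u := by nlinarith [Real.rpow_nonneg hK.le ((1:ℝ)/2)]
  · have : 0 ≤ K ^ ((5:ℝ)/2) := by positivity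
    linarith

lemma mul_sub_le_psiK (hK : 0 < K) {u : ℝ} (hu : 0 ≤ u) :
    K ^ ((1:ℝ)/2) * u - K ^ ((5:ℝ)/2) ≤ psiK K u := by
  have : 0 < K ^ ((1:ℝ)/2) := Real.rpow_pos_of_pos hK _
  unfold psiK
  rw [rpow_five_halves_eq hK]
  split_ifs with h
  · have : 0 ≤ u ^ ((5:ℝ)/4) := by positivity
    nlinarith
  · nlinarith

end psiK

open Finset in
lemma ConvexOn.map_sum_sq_div_sum_sq_le {ι : Type*} [Fintype ι] [Nonempty ι] {ψ : ℝ → ℝ}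
    (hψ : ConvexOn ℝ (Ici 0) ψ) (y : ι → ℝ) {lam : ι → ℝ} (hlam : ∀ i, lam i ≠ 0) :
    ψ ((∑ i, y i ^ 2) / ∑ i, lam i ^ 2)
      ≤ ∑ i, lam i ^ 2 / (∑ j, lam j ^ 2) * ψ ((y i / lam i) ^ 2) := by
  have hS : 0 < ∑ i, lam i ^ 2 :=
    sum_pos (fun i _ => by positivity [hlam i]) univ_nonempty
  have hw : ∑ i, lam i ^ 2 / ∑ j, lam j ^ 2 = 1 := by rw [← sum_div, div_self hS.ne']
  calc ψ ((∑ i, y i ^ 2) / ∑ i, lam i ^ 2)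
      = ψ (∑ i, (lam i ^ 2 / ∑ j, lam j ^ 2) • (y i / lam i) ^ 2) := by
        rw [sum_div]
        exact congrArg ψ (sum_congr rfl fun i _ => by rw [smul_eq_mul]; field_simp [hlam i])
    _ ≤ ∑ i, lam i ^ 2 / (∑ j, lam j ^ 2) * ψ ((y i / lam i) ^ 2) :=
        hψ.map_sum_le (fun i _ => by positivity) hw fun i _ => mem_Ici.mpr (sq_nonneg _)

noncomputable def luxemburgNorm {α : Type*} [MeasurableSpace α] (Φ : ℝ → ℝ) (μ : Measure α)
    (f : α → ℝ) : ℝ :=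
  sInf {lam : ℝ | 0 < lam ∧ ∫ x, Φ (f x / lam) ∂μ ≤ 1}

lemma orliczNormK_eq_luxemburgNorm (K : ℝ) (f : ℝ → ℝ) :
    orliczNormK K f = luxemburgNorm (GammaK K) (volume.restrict (Icc 0 1)) f :=
  rfl

section luxemburgNorm

variable {α : Type*} [MeasurableSpace α] {μ : Measure α}

lemma luxemburgNorm_nonneg (Φ : ℝ → ℝ) (μ : Measure α) (f : α → ℝ) :
    0 ≤ luxemburgNorm Φ μ f :=
  Real.sInf_nonneg fun _ h => h.1.le

lemma luxemburgNorm_le {Φ : ℝ → ℝ} {f : α → ℝ} {lam : ℝ} (hlam : 0 < lam)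
    (h : ∫ x, Φ (f x / lam) ∂μ ≤ 1) : luxemburgNorm Φ μ f ≤ lam :=
  csInf_le ⟨0, fun _ h => h.1.le⟩ ⟨hlam, h⟩

lemma luxemburgNorm_eq_zero_of_forall {Φ : ℝ → ℝ} {f : α → ℝ}
    (h : ∀ lam, 0 < lam → ∫ x, Φ (f x / lam) ∂μ ≤ 1) : luxemburgNorm Φ μ f = 0 :=
  le_antisymm (le_of_forall_pos_le_add fun ε hε => by simpa using luxemburgNorm_le hε (h ε hε))
    (luxemburgNorm_nonneg Φ μ f)

lemma luxemburgNorm_zero {Φ : ℝ → ℝ} (hΦ : Φ 0 ≤ 0) : luxemburgNorm Φ μ (fun _ => 0) = 0 :=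
  luxemburgNorm_eq_zero_of_forall fun _ _ => by
    simpa [integral_const] using
      (mul_nonpos_of_nonneg_of_nonpos measureReal_nonneg hΦ).trans zero_le_one

variable {ψ : ℝ → ℝ}

lemma integrable_comp_sq_div {c : ℝ} (hψm : Measurable ψ) (hψ0 : ∀ u, 0 ≤ u → 0 ≤ ψ u)
    (hψc : ∀ u, 0 ≤ u → ψ u ≤ c * u) {f : α → ℝ} (hf : AEStronglyMeasurable f μ)
    (hf2 : Integrable (fun x => f x ^ 2) μ) (lam : ℝ) :
    Integrable (fun x => ψ ((f x / lam) ^ 2)) μ :=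
  (hf2.const_mul (c / lam ^ 2)).mono'
    (hψm.comp_aemeasurable ((hf.aemeasurable.div_const lam).pow_const 2)).aestronglyMeasurable
    (ae_of_all _ fun x => by
      rw [Real.norm_of_nonneg (hψ0 _ (sq_nonneg _))]
      exact (hψc _ (sq_nonneg _)).trans_eq (by rw [div_pow]; ring))

lemma integrable_sq_of_integrable_comp_sq_div [IsFiniteMeasure μ] {a b : ℝ} (ha : 0 < a)
    (hψab : ∀ u, 0 ≤ u → a * u - b ≤ ψ u) {f : α → ℝ} (hf : AEStronglyMeasurable f μ)
    {lam : ℝ} (hlam : lam ≠ 0) (h : Integrable (fun x => ψ ((f x / lam) ^ 2)) μ) :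
    Integrable (fun x => f x ^ 2) μ :=
  ((h.add (integrable_const b)).const_mul (lam ^ 2 / a)).mono' (hf.pow 2)
    (ae_of_all _ fun x => by
      have := hψab _ (sq_nonneg (f x / lam))
      rw [Real.norm_of_nonneg (sq_nonneg _)]
      calc f x ^ 2 = lam ^ 2 / a * (a * (f x / lam) ^ 2) := by field_simp
        _ ≤ lam ^ 2 / a * (ψ ((f x / lam) ^ 2) + b) := by gcongr; linarith)

lemma luxemburgNorm_comp_sq_eq_zero_of_not_integrable [IsFiniteMeasure μ] {a b : ℝ} (ha : 0 < a)
    (hψab : ∀ u, 0 ≤ u → a * u - b ≤ ψ u) {f : α → ℝ} (hf : AEStronglyMeasurable f μ)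
    (hf2 : ¬ Integrable (fun x => f x ^ 2) μ) : luxemburgNorm (fun t => ψ (t ^ 2)) μ f = 0 :=
  luxemburgNorm_eq_zero_of_forall fun _ hlam => by
    rw [integral_undef fun h => hf2 (integrable_sq_of_integrable_comp_sq_div ha hψab hf hlam.ne' h)]
    exact zero_le_one

lemma exists_lt_of_luxemburgNorm_comp_sq_lt {c : ℝ} (hψm : Measurable ψ)
    (hψ0 : ∀ u, 0 ≤ u → 0 ≤ ψ u) (hψc : ∀ u, 0 ≤ u → ψ u ≤ c * u) {f : α → ℝ}
    (hf : AEStronglyMeasurable f μ) (hf2 : Integrable (fun x => f x ^ 2) μ) {r : ℝ}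
    (hr : luxemburgNorm (fun t => ψ (t ^ 2)) μ f < r) :
    ∃ lam < r, 0 < lam ∧ ∫ x, ψ ((f x / lam) ^ 2) ∂μ ≤ 1 := by
  have hc : 0 ≤ c := by simpa using (hψ0 1 zero_le_one).trans (hψc 1 zero_le_one)
  set I := ∫ x, f x ^ 2 ∂μ
  have hI : 0 ≤ I := integral_nonneg fun x => sq_nonneg _
  have hne : ∃ lam, 0 < lam ∧ ∫ x, ψ ((f x / lam) ^ 2) ∂μ ≤ 1 := by
    refine ⟨√(c * I + 1), by positivity, ?_⟩
    calc ∫ x, ψ ((f x / √(c * I + 1)) ^ 2) ∂μ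
        ≤ ∫ x, c / √(c * I + 1) ^ 2 * f x ^ 2 ∂μ :=
          integral_mono (integrable_comp_sq_div hψm hψ0 hψc hf hf2 _) (hf2.const_mul _)
            fun x => (hψc _ (sq_nonneg _)).trans_eq (by rw [div_pow]; ring)
      _ = c * I / (c * I + 1) := by
          rw [integral_const_mul, Real.sq_sqrt (by positivity)]; ring
      _ ≤ 1 := div_le_one_of_le₀ (by linarith) (by positivity)
  obtain ⟨lam, ⟨hlam, hle⟩, hlt⟩ := exists_lt_of_csInf_lt hne hr
  exact ⟨lam, hlt, hlam, hle⟩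

variable {ι : Type*} [Fintype ι]

lemma luxemburgNorm_sqrt_sum_sq_le_of_integral_le_one [Nonempty ι] (hψ : ConvexOn ℝ (Ici 0) ψ)
    (hψ0 : ∀ u, 0 ≤ u → 0 ≤ ψ u) {f : ι → α → ℝ} {lam : ι → ℝ} (hlam : ∀ i, 0 < lam i)
    (hint : ∀ i, Integrable (fun x => ψ ((f i x / lam i) ^ 2)) μ)
    (hle : ∀ i, ∫ x, ψ ((f i x / lam i) ^ 2) ∂μ ≤ 1) :
    luxemburgNorm (fun t => ψ (t ^ 2)) μ (fun x => √(∑ i, f i x ^ 2)) ≤ √(∑ i, lam i ^ 2) := by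
  have hS : 0 < ∑ i, lam i ^ 2 :=
    Finset.sum_pos (fun i _ => pow_pos (hlam i) 2) Finset.univ_nonempty
  refine luxemburgNorm_le (Real.sqrt_pos.mpr hS) ?_
  have hpt : ∀ x, ψ ((√(∑ i, f i x ^ 2) / √(∑ i, lam i ^ 2)) ^ 2)
      ≤ ∑ i, lam i ^ 2 / (∑ j, lam j ^ 2) * ψ ((f i x / lam i) ^ 2) := fun x => by
    rw [div_pow, Real.sq_sqrt (by positivity), Real.sq_sqrt hS.le]
    exact hψ.map_sum_sq_div_sum_sq_le (f · x) fun i => (hlam i).ne'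
  calc ∫ x, ψ ((√(∑ i, f i x ^ 2) / √(∑ i, lam i ^ 2)) ^ 2) ∂μ
      ≤ ∫ x, ∑ i, lam i ^ 2 / (∑ j, lam j ^ 2) * ψ ((f i x / lam i) ^ 2) ∂μ :=
        integral_mono_of_nonneg (ae_of_all _ fun x => hψ0 _ (sq_nonneg _))
          (integrable_finsetSum _ fun i _ => (hint i).const_mul _) (ae_of_all _ hpt)
    _ = ∑ i, lam i ^ 2 / (∑ j, lam j ^ 2) * ∫ x, ψ ((f i x / lam i) ^ 2) ∂μ := by
        rw [integral_finsetSum _ fun i _ => (hint i).const_mul _]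
        simp only [integral_const_mul]
    _ ≤ ∑ i, lam i ^ 2 / (∑ j, lam j ^ 2) := by
        gcongr with i
        exact mul_le_of_le_one_right (by positivity) (hle i)
    _ = 1 := by rw [← Finset.sum_div, div_self hS.ne']

lemma luxemburgNorm_sqrt_sum_sq_le_of_integrable [Nonempty ι] {c : ℝ}
    (hψ : ConvexOn ℝ (Ici 0) ψ) (hψm : Measurable ψ) (hψ0 : ∀ u, 0 ≤ u → 0 ≤ ψ u)
    (hψc : ∀ u, 0 ≤ u → ψ u ≤ c * u) {f : ι → α → ℝ} (hf : ∀ i, AEStronglyMeasurable (f i) μ)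
    (hf2 : ∀ i, Integrable (fun x => f i x ^ 2) μ) :
    luxemburgNorm (fun t => ψ (t ^ 2)) μ (fun x => √(∑ i, f i x ^ 2))
      ≤ √(∑ i, luxemburgNorm (fun t => ψ (t ^ 2)) μ (f i) ^ 2) := by
  set N := fun i => luxemburgNorm (fun t => ψ (t ^ 2)) μ (f i)
  refine Real.le_sqrt_of_sq_le (le_of_forall_pos_lt_add fun ε hε => ?_)
  have hδ : 0 < ε / Fintype.card ι := by positivity
  choose lam hlt hlam hle using fun i =>
    exists_lt_of_luxemburgNorm_comp_sq_lt hψm hψ0 hψc (hf i) (hf2 i)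
      (Real.lt_sqrt_of_sq_lt (lt_add_of_pos_right (N i ^ 2) hδ))
  have hnorm := luxemburgNorm_sqrt_sum_sq_le_of_integral_le_one hψ hψ0 hlam
    (fun i => integrable_comp_sq_div hψm hψ0 hψc (hf i) (hf2 i) _) hle
  calc luxemburgNorm (fun t => ψ (t ^ 2)) μ (fun x => √(∑ i, f i x ^ 2)) ^ 2
      ≤ ∑ i, lam i ^ 2 := (Real.le_sqrt (luxemburgNorm_nonneg _ _ _) (by positivity)).mp hnorm
    _ < ∑ i, (N i ^ 2 + ε / Fintype.card ι) :=
        Finset.sum_lt_sum_of_nonempty Finset.univ_nonempty fun i _ =>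
          (Real.lt_sqrt (hlam i).le).mp (hlt i)
    _ = ∑ i, N i ^ 2 + ε := by
        rw [Finset.sum_add_distrib, Finset.sum_const, Finset.card_univ, nsmul_eq_mul,
          mul_div_cancel₀ _ (by positivity)]

theorem luxemburgNorm_sqrt_sum_sq_le [IsFiniteMeasure μ] {a b c : ℝ}
    (hψ : ConvexOn ℝ (Ici 0) ψ) (hψm : Measurable ψ) (hψ0 : ∀ u, 0 ≤ u → 0 ≤ ψ u)
    (hψc : ∀ u, 0 ≤ u → ψ u ≤ c * u) (ha : 0 < a) (hψab : ∀ u, 0 ≤ u → a * u - b ≤ ψ u)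
    {f : ι → α → ℝ} (hf : ∀ i, AEStronglyMeasurable (f i) μ) :
    luxemburgNorm (fun t => ψ (t ^ 2)) μ (fun x => √(∑ i, f i x ^ 2))
      ≤ √(∑ i, luxemburgNorm (fun t => ψ (t ^ 2)) μ (f i) ^ 2) := by
  rcases isEmpty_or_nonempty ι with hι | hι
  · simpa using (luxemburgNorm_zero (μ := μ) (Φ := fun t => ψ (t ^ 2))
      (by simpa using hψc 0 le_rfl)).le
  by_cases hf2 : ∀ i, Integrable (fun x => f i x ^ 2) μ
  · exact luxemburgNorm_sqrt_sum_sq_le_of_integrable hψ hψm hψ0 hψc hf hf2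
  obtain ⟨i, hi⟩ := not_forall.mp hf2
  have hg : AEStronglyMeasurable (fun x => √(∑ i, f i x ^ 2)) μ :=
    Real.continuous_sqrt.comp_aestronglyMeasurable
      (Finset.aestronglyMeasurable_fun_sum _ fun i _ => (hf i).pow 2)
  have hg2 : ¬ Integrable (fun x => √(∑ i, f i x ^ 2) ^ 2) μ := fun h =>
    hi <| h.mono' ((hf i).pow 2) <| ae_of_all _ fun x => by
      rw [Real.norm_of_nonneg (sq_nonneg _), Real.sq_sqrt (by positivity)]
      exact Finset.single_le_sum (fun j _ => sq_nonneg (f j x)) (Finset.mem_univ i)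
  rw [luxemburgNorm_comp_sq_eq_zero_of_not_integrable ha hψab hg hg2]
  positivity

end luxemburgNorm

theorem orliczK_two_convex (K : ℝ) (hK : 0 < K) (k : ℕ) (f : Fin k → ℝ → ℝ)
    (hmeas : ∀ i, Measurable (f i)) :
    orliczNormK K (fun x => Real.sqrt (∑ i, f i x ^ 2))
      ≤ Real.sqrt (∑ i, orliczNormK K (f i) ^ 2) := by
  have hΓ : GammaK K = fun t => psiK K (t ^ 2) := funext (gammaK_eq_psiK_sq hK)
  simp only [orliczNormK_eq_luxemburgNorm, hΓ]
  exact luxemburgNorm_sqrt_sum_sq_le (convexOn_psiK hK) (continuous_psiK hK).measurable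
    (fun _ => psiK_nonneg hK) (fun _ => psiK_le_mul hK) (Real.rpow_pos_of_pos hK _)
    (fun _ => mul_sub_le_psiK hK) fun i => (hmeas i).aestronglyMeasurable
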